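/- arXiv:2512.11540 — 3 statements merged into one kernel-verified Lean document; each statement's English description precedes it below -/
import Mathlib

section
/- Let k be a field of characteristic zero, A a k-vector space with a bilinear product ∗ and a nondegenerate bilinear form ϖ, and let (B, ⋄, ω) be the specific perm algebra on the free k-module on (ℤ×ℤ)×{1,2} with its specific antisymmetric invariant bilinear form ω. Let · be the induced product on A ⊗ B and define 𝔅(a₁ ⊗ b₁, a₂ ⊗ b₂) = ϖ(a₁, a₂)·ω(b₁, b₂). Then the following are equivalent: (i) (A ⊗ B, ·) is a commutative associative algebra and 𝔅 is antisymmetric and satisfies the Connes cocycle condition 𝔅(u₁·u₂, u₃) + 𝔅(u₂·u₃, u₁) + 𝔅(u₃·u₁, u₂) = 0; (ii) (A, ∗, ϖ) is a quasi-Frobenius Zinbiel algebra. -/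
open TensorProduct

noncomputable section

def IsZinbiel {k A : Type} [Field k] [AddCommGroup A] [Module k A]
    (ast : A →ₗ[k] A →ₗ[k] A) : Prop :=
  ∀ a₁ a₂ a₃ : A, ast a₁ (ast a₂ a₃) = ast (ast a₁ a₂) a₃ + ast (ast a₂ a₁) a₃

def IsPreLie {k A : Type} [Field k] [AddCommGroup A] [Module k A]
    (circ : A →ₗ[k] A →ₗ[k] A) : Prop :=
  ∀ a₁ a₂ a₃ : A,
    circ (circ a₁ a₂) a₃ - circ a₁ (circ a₂ a₃)
      = circ (circ a₂ a₁) a₃ - circ a₂ (circ a₁ a₃)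

def IsPerm {k B : Type} [Field k] [AddCommGroup B] [Module k B]
    (dia : B →ₗ[k] B →ₗ[k] B) : Prop :=
  ∀ b₁ b₂ b₃ : B,
    dia b₁ (dia b₂ b₃) = dia (dia b₁ b₂) b₃ ∧
    dia (dia b₁ b₂) b₃ = dia (dia b₂ b₁) b₃

def IsPrePoisson {k A : Type} [Field k] [AddCommGroup A] [Module k A]
    (ast circ : A →ₗ[k] A →ₗ[k] A) : Prop :=
  IsZinbiel ast ∧ IsPreLie circ ∧
  (∀ a₁ a₂ a₃ : A,
    ast (circ a₁ a₂ - circ a₂ a₁) a₃ = circ a₁ (ast a₂ a₃) - ast a₂ (circ a₁ a₃)) ∧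
  (∀ a₁ a₂ a₃ : A,
    circ (ast a₁ a₂ + ast a₂ a₁) a₃ = ast a₁ (circ a₂ a₃) + ast a₂ (circ a₁ a₃))

def IsPoisson {k P : Type} [Field k] [AddCommGroup P] [Module k P]
    (mul br : P →ₗ[k] P →ₗ[k] P) : Prop :=
  (∀ u v : P, mul u v = mul v u) ∧
  (∀ u v w : P, mul (mul u v) w = mul u (mul v w)) ∧
  (∀ u v : P, br u v = - br v u) ∧
  (∀ u v w : P, br (br u v) w + br (br v w) u + br (br w u) v = 0) ∧
  (∀ u v w : P, br u (mul v w) = mul (br u v) w + mul v (br u w))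

def idm (k M : Type) [Field k] [AddCommGroup M] [Module k M] : M →ₗ[k] M :=
  LinearMap.id

def tau (k M : Type) [Field k] [AddCommGroup M] [Module k M] :
    M ⊗[k] M →ₗ[k] M ⊗[k] M :=
  (TensorProduct.comm k M M).toLinearMap

def unassoc (k M : Type) [Field k] [AddCommGroup M] [Module k M] :
    M ⊗[k] (M ⊗[k] M) →ₗ[k] (M ⊗[k] M) ⊗[k] M :=
  (TensorProduct.assoc k M M M).symm.toLinearMap

def intch (k A B : Type) [Field k] [AddCommGroup A] [Module k A]
    [AddCommGroup B] [Module k B] :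
    (A ⊗[k] A) ⊗[k] (B ⊗[k] B) →ₗ[k] (A ⊗[k] B) ⊗[k] (A ⊗[k] B) :=
  (TensorProduct.tensorTensorTensorComm k A A B B).toLinearMap

def IsZinbielCo {k A : Type} [Field k] [AddCommGroup A] [Module k A]
    (ϑ : A →ₗ[k] A ⊗[k] A) : Prop :=
  ∀ a : A,
    TensorProduct.map ϑ (idm k A) (ϑ a)
      + TensorProduct.map (tau k A) (idm k A) (TensorProduct.map ϑ (idm k A) (ϑ a))
    = unassoc k A (TensorProduct.map (idm k A) ϑ (ϑ a))

def IsPermCo {k B : Type} [Field k] [AddCommGroup B] [Module k B]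
    (ν : B →ₗ[k] B ⊗[k] B) : Prop :=
  ∀ b : B,
    TensorProduct.map ν (idm k B) (ν b)
      = unassoc k B (TensorProduct.map (idm k B) ν (ν b)) ∧
    TensorProduct.map ν (idm k B) (ν b)
      = TensorProduct.map (tau k B) (idm k B) (TensorProduct.map ν (idm k B) (ν b))

def IsPreLieCo {k A : Type} [Field k] [AddCommGroup A] [Module k A]
    (θ : A →ₗ[k] A ⊗[k] A) : Prop :=
  ∀ a : A,
    unassoc k A (TensorProduct.map (idm k A) θ (θ a))
      - TensorProduct.map (tau k A) (idm k A)
          (unassoc k A (TensorProduct.map (idm k A) θ (θ a)))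
    = TensorProduct.map θ (idm k A) (θ a)
      - TensorProduct.map (tau k A) (idm k A) (TensorProduct.map θ (idm k A) (θ a))

def Zexp {k A : Type} [Field k] [AddCommGroup A] [Module k A]
    (ast : A →ₗ[k] A →ₗ[k] A) {p : ℕ} (x y : Fin p → A) : (A ⊗[k] A) ⊗[k] A :=
  ∑ i : Fin p, ∑ j : Fin p,
    (((ast (x i) (x j)) ⊗ₜ[k] (y j)) ⊗ₜ[k] (y i)
      + ((y j) ⊗ₜ[k] (ast (x i) (x j))) ⊗ₜ[k] (y i)
      + ((x i) ⊗ₜ[k] (x j)) ⊗ₜ[k] (ast (y i) (y j))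
      + ((x j) ⊗ₜ[k] (x i)) ⊗ₜ[k] (ast (y i) (y j))
      - ((x i) ⊗ₜ[k] (ast (y i) (x j))) ⊗ₜ[k] (y j)
      - ((x j) ⊗ₜ[k] (ast (x i) (y j))) ⊗ₜ[k] (y i)
      - ((ast (x i) (y j)) ⊗ₜ[k] (x j)) ⊗ₜ[k] (y i)
      - ((ast (y i) (x j)) ⊗ₜ[k] (x i)) ⊗ₜ[k] (y j))

def PLexp {k A : Type} [Field k] [AddCommGroup A] [Module k A]
    (circ : A →ₗ[k] A →ₗ[k] A) {p : ℕ} (x y : Fin p → A) : (A ⊗[k] A) ⊗[k] A :=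
  ∑ i : Fin p, ∑ j : Fin p,
    (((circ (x i) (x j)) ⊗ₜ[k] (y j)) ⊗ₜ[k] (y i)
      + ((x j) ⊗ₜ[k] (circ (x i) (y j))) ⊗ₜ[k] (y i)
      + ((circ (y i) (x j)) ⊗ₜ[k] (x i)) ⊗ₜ[k] (y j)
      + ((x j) ⊗ₜ[k] (x i)) ⊗ₜ[k] (circ (y i) (y j))
      - ((y j) ⊗ₜ[k] (circ (x i) (x j))) ⊗ₜ[k] (y i)
      - ((x i) ⊗ₜ[k] (circ (y i) (x j))) ⊗ₜ[k] (y j)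
      - ((circ (x i) (y j)) ⊗ₜ[k] (x j)) ⊗ₜ[k] (y i)
      - ((x i) ⊗ₜ[k] (x j)) ⊗ₜ[k] (circ (y i) (y j)))

def AYexp {k P : Type} [Field k] [AddCommGroup P] [Module k P]
    (m : P →ₗ[k] P →ₗ[k] P) {ι : Type} [Fintype ι] (u v : ι → P) :
    (P ⊗[k] P) ⊗[k] P :=
  ∑ α : ι, ∑ β : ι,
    (((m (u α) (u β)) ⊗ₜ[k] (v α)) ⊗ₜ[k] (v β)
      + ((u α) ⊗ₜ[k] (m (v α) (u β))) ⊗ₜ[k] (v β)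
      - ((u β) ⊗ₜ[k] (u α)) ⊗ₜ[k] (m (v α) (v β)))

def CYexp {k P : Type} [Field k] [AddCommGroup P] [Module k P]
    (br : P →ₗ[k] P →ₗ[k] P) {ι : Type} [Fintype ι] (u v : ι → P) :
    (P ⊗[k] P) ⊗[k] P :=
  ∑ α : ι, ∑ β : ι,
    (((br (u α) (u β)) ⊗ₜ[k] (v α)) ⊗ₜ[k] (v β)
      + ((u α) ⊗ₜ[k] (u β)) ⊗ₜ[k] (br (v α) (v β))
      + ((u α) ⊗ₜ[k] (br (v α) (u β))) ⊗ₜ[k] (v β))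

def sharp (k : Type) [Field k] {V : Type} [AddCommGroup V] [Module k V]
    (s : V ⊗[k] V) (ξ : V →ₗ[k] k) : V :=
  TensorProduct.lid k V (LinearMap.rTensor V ξ s)

abbrev PermB (k : Type) [Field k] : Type := ((ℤ × ℤ) × Fin 2) →₀ k

def bB (k : Type) [Field k] (i₁ i₂ : ℤ) (s : Fin 2) : PermB k :=
  Finsupp.single ((i₁, i₂), s) 1

/-!
Write `e i s` for `bB k i.1 i.2 s = x^i ∂_{s+1}`, so that `e i s ⋄ e j t = e (i + j + ε s) t`
with `ε 0 = (1, 0)`, `ε 1 = (0, 1)`.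

For any perm algebra `(B, ⋄)` the product on `A ⊗ B` is commutative, and it is associative when
`A` is Zinbiel: by the perm identities the triple products in `B` of a pure-tensor associator
collapse to three, whose coefficients agree by the Zinbiel identity. If `ϖ` is symmetric and
invariant, `𝔅` is a Connes cocycle as soon as `ω (b₁ ⋄ b₂) b₃` is antisymmetric in `b₂, b₃` and
`ω` is itself a Connes cocycle for `⋄`, which the specific `ω` satisfies on basis vectors.

Conversely, the conditions on `A ⊗ B` evaluated on `a ⊗ e` for suitable basis vectors give back
the axioms on `A`: antisymmetry of `𝔅` at `(e 0 1, e 0 0)` is the symmetry of `ϖ`, the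
`e (2, 0) 1`-coefficient of associativity at `(e 0 0, e 0 0, e 0 1)` is the Zinbiel identity, and
the cocycle condition at `(e 0 0, e 0 0, e (-1, 0) 1)` is the invariance of `ϖ`.
-/

section ConnesCocycle

variable {R M Q : Type*} [CommSemiring R] [AddCommMonoid M] [Module R M]
  [AddCommMonoid Q] [Module R Q]

def LinearMap.rotate (C : M →ₗ[R] M →ₗ[R] M →ₗ[R] Q) : M →ₗ[R] M →ₗ[R] M →ₗ[R] Q :=
  (LinearMap.lflip.toLinearMap ∘ₗ C).flip

@[simp]
theorem LinearMap.rotate_apply (C : M →ₗ[R] M →ₗ[R] M →ₗ[R] Q) (u v w : M) :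
    C.rotate u v w = C v w u :=
  rfl

def IsConnesCocycle (mul : M →ₗ[R] M →ₗ[R] M) (β : M →ₗ[R] M →ₗ[R] R) : Prop :=
  ∀ u v w : M, β (mul u v) w + β (mul v w) u + β (mul w u) v = 0

theorem isConnesCocycle_iff (mul : M →ₗ[R] M →ₗ[R] M) (β : M →ₗ[R] M →ₗ[R] R) :
    IsConnesCocycle mul β ↔
      mul.compr₂ β + (mul.compr₂ β).rotate + (mul.compr₂ β).rotate.rotate = 0 := by
  simp only [IsConnesCocycle, LinearMap.ext_iff, LinearMap.add_apply, LinearMap.rotate_apply,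
    LinearMap.compr₂_apply, LinearMap.zero_apply]

end ConnesCocycle

section TensorExt

variable {R M N Q : Type*} [CommSemiring R] [AddCommMonoid M] [Module R M]
  [AddCommMonoid N] [Module R N] [AddCommMonoid Q] [Module R Q]

theorem TensorProduct.ext₂' {f g : M ⊗[R] N →ₗ[R] M ⊗[R] N →ₗ[R] Q}
    (h : ∀ a₁ b₁ a₂ b₂, f (a₁ ⊗ₜ b₁) (a₂ ⊗ₜ b₂) = g (a₁ ⊗ₜ b₁) (a₂ ⊗ₜ b₂)) : f = g :=
  ext' fun a₁ b₁ => ext' fun a₂ b₂ => h a₁ b₁ a₂ b₂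

theorem TensorProduct.ext₃' {f g : M ⊗[R] N →ₗ[R] M ⊗[R] N →ₗ[R] M ⊗[R] N →ₗ[R] Q}
    (h : ∀ a₁ b₁ a₂ b₂ a₃ b₃,
      f (a₁ ⊗ₜ b₁) (a₂ ⊗ₜ b₂) (a₃ ⊗ₜ b₃) = g (a₁ ⊗ₜ b₁) (a₂ ⊗ₜ b₂) (a₃ ⊗ₜ b₃)) : f = g :=
  ext' fun a₁ b₁ => ext₂' (h a₁ b₁)

end TensorExt

section InducedProduct

variable {k A B : Type} [Field k] [AddCommGroup A] [Module k A] [AddCommGroup B] [Module k B]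

def IsInducedMul (ast : A →ₗ[k] A →ₗ[k] A) (dia : B →ₗ[k] B →ₗ[k] B)
    (m : A ⊗[k] B →ₗ[k] A ⊗[k] B →ₗ[k] A ⊗[k] B) : Prop :=
  ∀ (a₁ a₂ : A) (b₁ b₂ : B),
    m (a₁ ⊗ₜ b₁) (a₂ ⊗ₜ b₂) = ast a₁ a₂ ⊗ₜ dia b₁ b₂ + ast a₂ a₁ ⊗ₜ dia b₂ b₁

def IsInducedForm (ϖ : A →ₗ[k] A →ₗ[k] k) (ω : B →ₗ[k] B →ₗ[k] k)
    (Bf : A ⊗[k] B →ₗ[k] A ⊗[k] B →ₗ[k] k) : Prop :=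
  ∀ (a₁ a₂ : A) (b₁ b₂ : B), Bf (a₁ ⊗ₜ b₁) (a₂ ⊗ₜ b₂) = ϖ a₁ a₂ * ω b₁ b₂

variable {ast : A →ₗ[k] A →ₗ[k] A} {ϖ : A →ₗ[k] A →ₗ[k] k}
  {dia : B →ₗ[k] B →ₗ[k] B} {ω : B →ₗ[k] B →ₗ[k] k}
  {m : A ⊗[k] B →ₗ[k] A ⊗[k] B →ₗ[k] A ⊗[k] B} {Bf : A ⊗[k] B →ₗ[k] A ⊗[k] B →ₗ[k] k}

theorem tensorMul_comm
    (hm : IsInducedMul ast dia m)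
    (u v : A ⊗[k] B) : m u v = m v u := by
  have : m = m.flip := TensorProduct.ext₂' fun a₁ b₁ a₂ b₂ => by simp [hm _ _ _ _, add_comm]
  exact LinearMap.congr_fun₂ this u v

theorem tensorMul_assoc (hast : IsZinbiel ast) (hdia : IsPerm dia)
    (hm : IsInducedMul ast dia m)
    (u v w : A ⊗[k] B) : m (m u v) w = m u (m v w) := by
  have : m.compr₂ m = (LinearMap.llcomp k _ _ _ ∘ₗ m).compl₂ m := by
    refine TensorProduct.ext₃' fun a₁ b₁ a₂ b₂ a₃ b₃ => ?_
    have hassoc (x y z : B) : dia x (dia y z) = dia (dia x y) z := (hdia x y z).1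
    simp only [LinearMap.compr₂_apply, LinearMap.compl₂_apply, LinearMap.comp_apply,
      LinearMap.llcomp_apply, hm _ _ _ _, map_add, LinearMap.add_apply, hassoc]
    rw [(hdia b₂ b₁ b₃).2, (hdia b₃ b₁ b₂).2, (hdia b₃ b₂ b₁).2, hast a₁ a₂ a₃,
      hast a₃ a₁ a₂, hast a₁ a₃ a₂, hast a₃ a₂ a₁]
    simp only [add_tmul]
    abel
  exact congr($this u v w)

theorem tensorForm_antisymm (hϖ : ∀ a₁ a₂, ϖ a₁ a₂ = ϖ a₂ a₁) (hω : ∀ b₁ b₂, ω b₁ b₂ = -ω b₂ b₁)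
    (hBf : IsInducedForm ϖ ω Bf)
    (u v : A ⊗[k] B) : Bf u v = -Bf v u := by
  have : Bf = -Bf.flip := TensorProduct.ext₂' fun a₁ b₁ a₂ b₂ => by
    simp [hBf _ _ _ _, hϖ a₁ a₂, hω b₁ b₂]
  exact LinearMap.congr_fun₂ this u v

theorem tensorForm_isConnesCocycle (hϖ : ∀ a₁ a₂, ϖ a₁ a₂ = ϖ a₂ a₁)
    (hinv : ∀ a₁ a₂ a₃, ϖ (ast a₁ a₂ + ast a₂ a₁) a₃ = ϖ a₁ (ast a₂ a₃) + ϖ a₂ (ast a₁ a₃))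
    (hskew : ∀ b₁ b₂ b₃, ω (dia b₁ b₂) b₃ + ω (dia b₁ b₃) b₂ = 0)
    (hcocycle : IsConnesCocycle dia ω)
    (hm : IsInducedMul ast dia m)
    (hBf : IsInducedForm ϖ ω Bf) :
    IsConnesCocycle m Bf := by
  have key (x y z : A) :
      ϖ (ast x y) z + ϖ (ast y x) z = ϖ (ast y z) x + ϖ (ast x z) y := by
    rw [← LinearMap.add_apply, ← map_add, hinv, hϖ x, hϖ y]
  rw [isConnesCocycle_iff]
  refine TensorProduct.ext₃' fun a₁ b₁ a₂ b₂ a₃ b₃ => ?_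
  simp only [LinearMap.add_apply, LinearMap.rotate_apply, LinearMap.compr₂_apply, hm _ _ _ _,
    map_add, hBf _ _ _ _, LinearMap.zero_apply]
  -- `hskew` and `hcocycle` express all six ω-coefficients through `ω (dia b₁ b₂) b₃` and
  -- `ω (dia b₂ b₁) b₃`, whose cofactors are then instances of `key`.
  linear_combination ϖ (ast a₁ a₃) a₂ * hskew b₁ b₂ b₃ + ϖ (ast a₃ a₂) a₁ * hskew b₃ b₁ b₂
    + (ϖ (ast a₂ a₃) a₁ - ϖ (ast a₃ a₁) a₂ + ϖ (ast a₃ a₂) a₁) * hskew b₂ b₁ b₃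
    + (ϖ (ast a₃ a₁) a₂ - ϖ (ast a₃ a₂) a₁) * hcocycle b₁ b₂ b₃
    - ω (dia b₁ b₂) b₃ * key a₃ a₁ a₂ - ω (dia b₂ b₁) b₃ * key a₂ a₃ a₁

end InducedProduct

namespace PermB

variable {k : Type} [Field k]

theorem ext₂ {Q : Type*} [AddCommMonoid Q] [Module k Q] {f g : PermB k →ₗ[k] PermB k →ₗ[k] Q}
    (h : ∀ i₁ j₁ s₁ i₂ j₂ s₂,
      f (bB k i₁ j₁ s₁) (bB k i₂ j₂ s₂) = g (bB k i₁ j₁ s₁) (bB k i₂ j₂ s₂)) :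
    f = g :=
  Finsupp.basisSingleOne.ext fun ⟨⟨i₁, j₁⟩, s₁⟩ =>
    Finsupp.basisSingleOne.ext fun ⟨⟨i₂, j₂⟩, s₂⟩ => h i₁ j₁ s₁ i₂ j₂ s₂

theorem ext₃ {Q : Type*} [AddCommMonoid Q] [Module k Q]
    {f g : PermB k →ₗ[k] PermB k →ₗ[k] PermB k →ₗ[k] Q}
    (h : ∀ i₁ j₁ s₁ i₂ j₂ s₂ i₃ j₃ s₃,
      f (bB k i₁ j₁ s₁) (bB k i₂ j₂ s₂) (bB k i₃ j₃ s₃)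
        = g (bB k i₁ j₁ s₁) (bB k i₂ j₂ s₂) (bB k i₃ j₃ s₃)) :
    f = g :=
  Finsupp.basisSingleOne.ext fun ⟨⟨i₁, j₁⟩, s₁⟩ => ext₂ (h i₁ j₁ s₁)

def IsStdMul (dia : PermB k →ₗ[k] PermB k →ₗ[k] PermB k) : Prop :=
  ∀ (i₁ i₂ j₁ j₂ : ℤ) (s t : Fin 2),
    dia (bB k i₁ i₂ s) (bB k j₁ j₂ t)
      = if s = 0 then bB k (i₁ + j₁ + 1) (i₂ + j₂) t else bB k (i₁ + j₁) (i₂ + j₂ + 1) t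

def IsStdForm (ω : PermB k →ₗ[k] PermB k →ₗ[k] k) : Prop :=
  ∀ (i₁ i₂ j₁ j₂ : ℤ) (s t : Fin 2),
    ω (bB k i₁ i₂ s) (bB k j₁ j₂ t)
      = if s = 1 ∧ t = 0 then (if i₁ + j₁ = 0 ∧ i₂ + j₂ = 0 then (1 : k) else 0)
        else if s = 0 ∧ t = 1 then -(if i₁ + j₁ = 0 ∧ i₂ + j₂ = 0 then (1 : k) else 0)
        else 0

variable {dia : PermB k →ₗ[k] PermB k →ₗ[k] PermB k} {ω : PermB k →ₗ[k] PermB k →ₗ[k] k}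

theorem isPerm (hdia : IsStdMul dia) : IsPerm dia := by
  have hassoc : (LinearMap.llcomp k _ _ _ ∘ₗ dia).compl₂ dia = dia.compr₂ dia := by
    refine ext₃ fun i₁ j₁ s₁ i₂ j₂ s₂ i₃ j₃ s₃ => ?_
    fin_cases s₁ <;> fin_cases s₂ <;> simp [hdia _ _ _ _ _ _] <;> congr 1 <;> ring
  have hcomm : dia.compr₂ dia = (dia.compr₂ dia).flip := by
    refine ext₃ fun i₁ j₁ s₁ i₂ j₂ s₂ i₃ j₃ s₃ => ?_
    fin_cases s₁ <;> fin_cases s₂ <;> simp [hdia _ _ _ _ _ _] <;> congr 1 <;> ring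
  exact fun b₁ b₂ b₃ => ⟨congr($hassoc b₁ b₂ b₃), congr($hcomm b₁ b₂ b₃)⟩

theorem form_antisymm (hω : IsStdForm ω) (b₁ b₂ : PermB k) : ω b₁ b₂ = -ω b₂ b₁ := by
  have : ω = -ω.flip := ext₂ fun i₁ j₁ s₁ i₂ j₂ s₂ => by
    fin_cases s₁ <;> fin_cases s₂ <;> simp [hω _ _ _ _ _ _, add_comm]
  exact LinearMap.congr_fun₂ this b₁ b₂

theorem form_mul_skew (hdia : IsStdMul dia) (hω : IsStdForm ω) (b₁ b₂ b₃ : PermB k) :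
    ω (dia b₁ b₂) b₃ + ω (dia b₁ b₃) b₂ = 0 := by
  have : dia.compr₂ ω + LinearMap.lflip.toLinearMap ∘ₗ dia.compr₂ ω = 0 :=
    ext₃ fun i₁ j₁ s₁ i₂ j₂ s₂ i₃ j₃ s₃ => by
      fin_cases s₁ <;> fin_cases s₂ <;> fin_cases s₃ <;>
        simp [hdia _ _ _ _ _ _, hω _ _ _ _ _ _] <;> split_ifs <;> first | ring1 | (exfalso; omega)
  exact congr($this b₁ b₂ b₃)

theorem isConnesCocycle (hdia : IsStdMul dia) (hω : IsStdForm ω) : IsConnesCocycle dia ω := by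
  rw [isConnesCocycle_iff]
  refine ext₃ fun i₁ j₁ s₁ i₂ j₂ s₂ i₃ j₃ s₃ => ?_
  fin_cases s₁ <;> fin_cases s₂ <;> fin_cases s₃ <;>
    simp [hdia _ _ _ _ _ _, hω _ _ _ _ _ _] <;> split_ifs <;> first | ring1 | (exfalso; omega)

end PermB

section Converse

variable {k A : Type} [Field k] [AddCommGroup A] [Module k A]
  {ast : A →ₗ[k] A →ₗ[k] A} {ϖ : A →ₗ[k] A →ₗ[k] k}
  {dia : PermB k →ₗ[k] PermB k →ₗ[k] PermB k} {ω : PermB k →ₗ[k] PermB k →ₗ[k] k}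
  {m : A ⊗[k] PermB k →ₗ[k] A ⊗[k] PermB k →ₗ[k] A ⊗[k] PermB k}
  {Bf : A ⊗[k] PermB k →ₗ[k] A ⊗[k] PermB k →ₗ[k] k}

theorem symm_of_tensorForm_antisymm (hω : PermB.IsStdForm ω)
    (hBf : IsInducedForm ϖ ω Bf)
    (hanti : ∀ u v, Bf u v = -Bf v u) (a₁ a₂ : A) : ϖ a₁ a₂ = ϖ a₂ a₁ := by
  simpa [hBf _ _ _ _, hω _ _ _ _ _ _] using hanti (a₁ ⊗ₜ bB k 0 0 1) (a₂ ⊗ₜ bB k 0 0 0)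

theorem isZinbiel_of_tensorMul_assoc (hdia : PermB.IsStdMul dia)
    (hm : IsInducedMul ast dia m)
    (hassoc : ∀ u v w, m (m u v) w = m u (m v w)) : IsZinbiel ast := by
  intro a₁ a₂ a₃
  have h := congr(finsuppScalarRight k k A _ $(hassoc (a₁ ⊗ₜ bB k 0 0 0) (a₂ ⊗ₜ bB k 0 0 0)
    (a₃ ⊗ₜ bB k 0 0 1)) ((2, 0), 1))
  simp [hm _ _ _ _, hdia _ _ _ _ _ _] at h
  norm_num [bB, finsuppScalarRight_apply_tmul_apply, Finsupp.single_apply] at h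
  exact h.symm

theorem invariant_of_tensorForm_isConnesCocycle (hdia : PermB.IsStdMul dia)
    (hω : PermB.IsStdForm ω)
    (hm : IsInducedMul ast dia m)
    (hBf : IsInducedForm ϖ ω Bf)
    (hϖ : ∀ a₁ a₂, ϖ a₁ a₂ = ϖ a₂ a₁) (hcocycle : IsConnesCocycle m Bf) (a₁ a₂ a₃ : A) :
    ϖ (ast a₁ a₂ + ast a₂ a₁) a₃ = ϖ a₁ (ast a₂ a₃) + ϖ a₂ (ast a₁ a₃) := by
  have h := hcocycle (a₁ ⊗ₜ bB k 0 0 0) (a₂ ⊗ₜ bB k 0 0 0) (a₃ ⊗ₜ bB k (-1) 0 1)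
  simp [hm _ _ _ _, hBf _ _ _ _, hdia _ _ _ _ _ _, hω _ _ _ _ _ _] at h
  rw [map_add, LinearMap.add_apply, hϖ a₁, hϖ a₂]
  linear_combination -h

end Converse

theorem statement15_general (k A : Type) [Field k]
    [AddCommGroup A] [Module k A]
    (ast : A →ₗ[k] A →ₗ[k] A)
    (ϖ : A →ₗ[k] A →ₗ[k] k)
    (dia : PermB k →ₗ[k] PermB k →ₗ[k] PermB k)
    (hdia : ∀ (i₁ i₂ j₁ j₂ : ℤ) (s t : Fin 2),
      dia (bB k i₁ i₂ s) (bB k j₁ j₂ t)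
        = if s = 0 then bB k (i₁ + j₁ + 1) (i₂ + j₂) t
          else bB k (i₁ + j₁) (i₂ + j₂ + 1) t)
    (ω : PermB k →ₗ[k] PermB k →ₗ[k] k)
    (hω : ∀ (i₁ i₂ j₁ j₂ : ℤ) (s t : Fin 2),
      ω (bB k i₁ i₂ s) (bB k j₁ j₂ t)
        = if s = 1 ∧ t = 0 then (if i₁ + j₁ = 0 ∧ i₂ + j₂ = 0 then (1 : k) else 0)
          else if s = 0 ∧ t = 1 then -(if i₁ + j₁ = 0 ∧ i₂ + j₂ = 0 then (1 : k) else 0)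
          else 0)
    (m : A ⊗[k] PermB k →ₗ[k] A ⊗[k] PermB k →ₗ[k] A ⊗[k] PermB k)
    (hm : ∀ (a₁ a₂ : A) (b₁ b₂ : PermB k),
      m (a₁ ⊗ₜ[k] b₁) (a₂ ⊗ₜ[k] b₂)
        = (ast a₁ a₂) ⊗ₜ[k] (dia b₁ b₂) + (ast a₂ a₁) ⊗ₜ[k] (dia b₂ b₁))
    (Bf : A ⊗[k] PermB k →ₗ[k] A ⊗[k] PermB k →ₗ[k] k)
    (hBf : ∀ (a₁ a₂ : A) (b₁ b₂ : PermB k),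
      Bf (a₁ ⊗ₜ[k] b₁) (a₂ ⊗ₜ[k] b₂) = ϖ a₁ a₂ * ω b₁ b₂)
    :
    ((∀ u v : A ⊗[k] PermB k, m u v = m v u) ∧
     (∀ u v w : A ⊗[k] PermB k, m (m u v) w = m u (m v w)) ∧
     (∀ u v : A ⊗[k] PermB k, Bf u v = - Bf v u) ∧
     (∀ u₁ u₂ u₃ : A ⊗[k] PermB k,
       Bf (m u₁ u₂) u₃ + Bf (m u₂ u₃) u₁ + Bf (m u₃ u₁) u₂ = 0))
    ↔ (IsZinbiel ast ∧ ((∀ a₁ a₂ : A, ϖ a₁ a₂ = ϖ a₂ a₁) ∧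
       (∀ a₁ a₂ a₃ : A,
         ϖ (ast a₁ a₂ + ast a₂ a₁) a₃ = ϖ a₁ (ast a₂ a₃) + ϖ a₂ (ast a₁ a₃)))) := by
  constructor
  · rintro ⟨-, hassoc, hanti, hcocycle⟩
    have hϖ := symm_of_tensorForm_antisymm hω hBf hanti
    exact ⟨isZinbiel_of_tensorMul_assoc hdia hm hassoc, hϖ,
      invariant_of_tensorForm_isConnesCocycle hdia hω hm hBf hϖ hcocycle⟩
  · rintro ⟨hast, hϖ, hinv⟩
    exact ⟨tensorMul_comm hm, tensorMul_assoc hast (PermB.isPerm hdia) hm,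
      tensorForm_antisymm hϖ (PermB.form_antisymm hω) hBf,
      tensorForm_isConnesCocycle hϖ hinv (PermB.form_mul_skew hdia hω)
        (PermB.isConnesCocycle hdia hω) hm hBf⟩

theorem statement15 (k A : Type) [Field k] [CharZero k]
    [AddCommGroup A] [Module k A]
    (ast : A →ₗ[k] A →ₗ[k] A)
    (ϖ : A →ₗ[k] A →ₗ[k] k)
    (hnd : ∀ a : A, (∀ a' : A, ϖ a a' = 0) → a = 0)
    (dia : PermB k →ₗ[k] PermB k →ₗ[k] PermB k)
    (hdia : ∀ (i₁ i₂ j₁ j₂ : ℤ) (s t : Fin 2),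
      dia (bB k i₁ i₂ s) (bB k j₁ j₂ t)
        = if s = 0 then bB k (i₁ + j₁ + 1) (i₂ + j₂) t
          else bB k (i₁ + j₁) (i₂ + j₂ + 1) t)
    (ω : PermB k →ₗ[k] PermB k →ₗ[k] k)
    (hω : ∀ (i₁ i₂ j₁ j₂ : ℤ) (s t : Fin 2),
      ω (bB k i₁ i₂ s) (bB k j₁ j₂ t)
        = if s = 1 ∧ t = 0 then (if i₁ + j₁ = 0 ∧ i₂ + j₂ = 0 then (1 : k) else 0)
          else if s = 0 ∧ t = 1 then -(if i₁ + j₁ = 0 ∧ i₂ + j₂ = 0 then (1 : k) else 0)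
          else 0)
    (m : A ⊗[k] PermB k →ₗ[k] A ⊗[k] PermB k →ₗ[k] A ⊗[k] PermB k)
    (hm : ∀ (a₁ a₂ : A) (b₁ b₂ : PermB k),
      m (a₁ ⊗ₜ[k] b₁) (a₂ ⊗ₜ[k] b₂)
        = (ast a₁ a₂) ⊗ₜ[k] (dia b₁ b₂) + (ast a₂ a₁) ⊗ₜ[k] (dia b₂ b₁))
    (Bf : A ⊗[k] PermB k →ₗ[k] A ⊗[k] PermB k →ₗ[k] k)
    (hBf : ∀ (a₁ a₂ : A) (b₁ b₂ : PermB k),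
      Bf (a₁ ⊗ₜ[k] b₁) (a₂ ⊗ₜ[k] b₂) = ϖ a₁ a₂ * ω b₁ b₂)
    :
    ((∀ u v : A ⊗[k] PermB k, m u v = m v u) ∧
     (∀ u v w : A ⊗[k] PermB k, m (m u v) w = m u (m v w)) ∧
     (∀ u v : A ⊗[k] PermB k, Bf u v = - Bf v u) ∧
     (∀ u₁ u₂ u₃ : A ⊗[k] PermB k,
       Bf (m u₁ u₂) u₃ + Bf (m u₂ u₃) u₁ + Bf (m u₃ u₁) u₂ = 0))
    ↔ (IsZinbiel ast ∧ ((∀ a₁ a₂ : A, ϖ a₁ a₂ = ϖ a₂ a₁) ∧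
       (∀ a₁ a₂ a₃ : A,
         ϖ (ast a₁ a₂ + ast a₂ a₁) a₃ = ϖ a₁ (ast a₂ a₃) + ϖ a₂ (ast a₁ a₃)))) :=
  statement15_general k A ast ϖ dia hdia ω hω m hm Bf hBf
end
end

section
/- Let k be a field of characteristic zero, (A, ∗, ∘) a finite-dimensional pre-Poisson algebra and r ∈ A ⊗ A symmetric (τ(r) = r). Then r is a solution of the pre-Poisson Yang–Baxter equation in (A, ∗, ∘) if and only if the linear map r^♯ : A* → A is an 𝒪-operator of (A, ∗, ∘) associated to the coregular representation, i.e. for all ξ₁, ξ₂ ∈ A*: r^♯(ξ₁) ∗ r^♯(ξ₂) = r^♯(α) where α ∈ A* is defined by ⟨α, v⟩ = ⟨ξ₂, r^♯(ξ₁) ∗ v + v ∗ r^♯(ξ₁)⟩ − ⟨ξ₁, v ∗ r^♯(ξ₂)⟩ for all v ∈ A, and r^♯(ξ₁) ∘ r^♯(ξ₂) = r^♯(β) where β ∈ A* is defined by ⟨β, v⟩ = ⟨ξ₂, v ∘ r^♯(ξ₁) − r^♯(ξ₁) ∘ v⟩ + ⟨ξ₁, v ∘ r^♯(ξ₂)⟩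 for all v ∈ A. -/
open TensorProduct

noncomputable section

/-!
Pair both tensors with `ξ₁ ⊗ ξ₃ ⊗ ξ₂`. Writing `r = ∑ xᵢ ⊗ yᵢ = ∑ yᵢ ⊗ xᵢ` (symmetry), every
double sum in `Z_r` or `PL_r` contracts to a value `ξ (r^♯ ξ' ⋆ r^♯ ξ'')`, whichever legs of the
two copies of `r` it pairs. Four of the eight terms then cancel in pairs, and the other four are
`ξ₃ (r^♯ α - r^♯ ξ₁ ∗ r^♯ ξ₂)` (resp. the `∘` analogue with `β`), by `⟨ξ₃, r^♯ α⟩ = ⟨α, r^♯ ξ₃⟩`.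
In finite dimension the functionals `ξ ⊗ ξ' ⊗ ξ''` separate the points of `A ⊗ A ⊗ A`.
-/

section TripleEval

variable {k A : Type} [Field k] [AddCommGroup A] [Module k A]

def tripleEval (a b c : A →ₗ[k] k) : (A ⊗[k] A) ⊗[k] A →ₗ[k] k :=
  TensorProduct.lift ((LinearMap.mul k k).compl₁₂
    (TensorProduct.lift ((LinearMap.mul k k).compl₁₂ a b)) c)

@[simp] lemma tripleEval_tmul (a b c : A →ₗ[k] k) (u v w : A) :
    tripleEval a b c ((u ⊗ₜ[k] v) ⊗ₜ[k] w) = a u * b v * c w := by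
  simp [tripleEval]

lemma tripleEval_basis_coord {ι : Type} (b : Module.Basis ι k A) (i j l : ι)
    (t : (A ⊗[k] A) ⊗[k] A) :
    tripleEval (b.coord i) (b.coord j) (b.coord l) t
      = ((b.tensorProduct b).tensorProduct b).repr t ((i, j), l) := by
  induction t using TensorProduct.induction_on with
  | zero => simp
  | tmul z w =>
    induction z using TensorProduct.induction_on with
    | zero => simp
    | tmul u v => simp [Module.Basis.tensorProduct_repr_tmul_apply, mul_comm]
    | add z z' hz hz' => simp only [add_tmul, map_add, Finsupp.add_apply, hz, hz']
  | add t t' ht ht' => simp only [map_add, Finsupp.add_apply, ht, ht']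

lemma eq_zero_iff_forall_tripleEval [FiniteDimensional k A] (t : (A ⊗[k] A) ⊗[k] A) :
    t = 0 ↔ ∀ a b c : A →ₗ[k] k, tripleEval a b c t = 0 := by
  refine ⟨fun ht a b c ↦ by rw [ht, map_zero], fun h ↦ ?_⟩
  let b := Module.finBasis k A
  refine ((b.tensorProduct b).tensorProduct b).repr.map_eq_zero_iff.mp (Finsupp.ext ?_)
  rintro ⟨⟨i, j⟩, l⟩
  rw [← tripleEval_basis_coord, h, Finsupp.coe_zero, Pi.zero_apply]

end TripleEval

section Sharp

variable {k A : Type} [Field k] [AddCommGroup A] [Module k A]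

lemma sharp_sum_tmul {ι : Type} [Fintype ι] {r : A ⊗[k] A} {u v : ι → A}
    (hr : r = ∑ i, u i ⊗ₜ[k] v i) (ξ : A →ₗ[k] k) :
    sharp k r ξ = ∑ i, ξ (u i) • v i := by
  simp [sharp, hr]

lemma apply_sharp_eq_apply_sharp_comm (r : A ⊗[k] A) (f g : A →ₗ[k] k) :
    f (sharp k r g) = g (sharp k (TensorProduct.comm k A A r) f) := by
  induction r using TensorProduct.induction_on with
  | zero => simp [sharp]
  | tmul u v => simp [sharp, mul_comm]
  | add s t hs ht => simp only [sharp, map_add] at hs ht ⊢; rw [hs, ht]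

lemma sum_tmul_comm {ι : Type} [Fintype ι] {r : A ⊗[k] A} {u v : ι → A}
    (hr : r = ∑ i, u i ⊗ₜ[k] v i) (hsym : TensorProduct.comm k A A r = r) :
    r = ∑ i, v i ⊗ₜ[k] u i := by
  rw [← hsym, hr, map_sum]
  simp

lemma apply_bilin_sharp_sharp {ι κ : Type} [Fintype ι] [Fintype κ] {r : A ⊗[k] A}
    {u v : ι → A} {u' v' : κ → A} (hr : r = ∑ i, u i ⊗ₜ[k] v i)
    (hr' : r = ∑ j, u' j ⊗ₜ[k] v' j) (m : A →ₗ[k] A →ₗ[k] A) (f g h : A →ₗ[k] k) :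
    h (m (sharp k r f) (sharp k r g)) = ∑ i, ∑ j, f (u i) * g (u' j) * h (m (v i) (v' j)) := by
  rw [sharp_sum_tmul hr f, sharp_sum_tmul hr' g]
  simp only [map_sum, map_smul, LinearMap.sum_apply, LinearMap.smul_apply, smul_eq_mul,
    Finset.mul_sum, mul_assoc]
  rw [Finset.sum_comm]
  exact Finset.sum_congr rfl fun i _ ↦ Finset.sum_congr rfl fun j _ ↦ mul_left_comm _ _ _

end Sharp

section YangBaxter

variable {k A : Type} [Field k] [AddCommGroup A] [Module k A] {p : ℕ} {r : A ⊗[k] A}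
  {x y : Fin p → A}

lemma tripleEval_Zexp (hr : r = ∑ i, x i ⊗ₜ[k] y i) (hsym : TensorProduct.comm k A A r = r)
    (m : A →ₗ[k] A →ₗ[k] A) (a b c : A →ₗ[k] k) :
    tripleEval a b c (Zexp m x y) =
      c (m (sharp k r a) (sharp k r b)) + c (m (sharp k r b) (sharp k r a))
        - b (m (sharp k r a) (sharp k r c)) - a (m (sharp k r b) (sharp k r c)) := by
  have hr' := sum_tmul_comm hr hsym
  -- one contraction per term of `Zexp`; `h1, h7` and `h2, h6` share their left sides
  have h1 := apply_bilin_sharp_sharp hr' hr' m c b a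
  have h2 := apply_bilin_sharp_sharp hr' hr' m c a b
  have h3 := apply_bilin_sharp_sharp hr hr m a b c
  have h4 := apply_bilin_sharp_sharp hr hr m b a c
  have h5 := apply_bilin_sharp_sharp hr hr' m a c b
  have h6 := apply_bilin_sharp_sharp hr' hr m c a b
  have h7 := apply_bilin_sharp_sharp hr' hr m c b a
  have h8 := apply_bilin_sharp_sharp hr hr' m b c a
  simp only [Zexp, map_sum, map_add, map_sub, tripleEval_tmul, Finset.sum_add_distrib,
    Finset.sum_sub_distrib]
  simp only [mul_comm, mul_left_comm, mul_assoc] at h1 h2 h3 h4 h5 h6 h7 h8 ⊢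
  linear_combination h5 + h6 + h7 + h8 - h1 - h2 - h3 - h4

lemma tripleEval_PLexp (hr : r = ∑ i, x i ⊗ₜ[k] y i) (hsym : TensorProduct.comm k A A r = r)
    (m : A →ₗ[k] A →ₗ[k] A) (a b c : A →ₗ[k] k) :
    tripleEval a b c (PLexp m x y) =
      a (m (sharp k r b) (sharp k r c)) + c (m (sharp k r b) (sharp k r a))
        - b (m (sharp k r a) (sharp k r c)) - c (m (sharp k r a) (sharp k r b)) := by
  have hr' := sum_tmul_comm hr hsym
  -- one contraction per term of `PLexp`; `h1, h7` and `h2, h5` share their left sides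
  have h1 := apply_bilin_sharp_sharp hr' hr' m c b a
  have h2 := apply_bilin_sharp_sharp hr' hr m c a b
  have h3 := apply_bilin_sharp_sharp hr hr' m b c a
  have h4 := apply_bilin_sharp_sharp hr hr m b a c
  have h5 := apply_bilin_sharp_sharp hr' hr' m c a b
  have h6 := apply_bilin_sharp_sharp hr hr' m a c b
  have h7 := apply_bilin_sharp_sharp hr' hr m c b a
  have h8 := apply_bilin_sharp_sharp hr hr m a b c
  simp only [PLexp, map_sum, map_add, map_sub, tripleEval_tmul, Finset.sum_add_distrib,
    Finset.sum_sub_distrib]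
  simp only [mul_comm, mul_left_comm, mul_assoc] at h1 h2 h3 h4 h5 h6 h7 h8 ⊢
  linear_combination h5 + h6 + h7 + h8 - h1 - h2 - h3 - h4

lemma sharp_zinbiel_eq_iff (hr : r = ∑ i, x i ⊗ₜ[k] y i)
    (hsym : TensorProduct.comm k A A r = r) (m : A →ₗ[k] A →ₗ[k] A) (ξ₁ ξ₂ : A →ₗ[k] k) :
    m (sharp k r ξ₁) (sharp k r ξ₂)
        = sharp k r (ξ₂ ∘ₗ (m (sharp k r ξ₁) + m.flip (sharp k r ξ₁))
            - ξ₁ ∘ₗ m.flip (sharp k r ξ₂))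
      ↔ ∀ ξ₃, tripleEval ξ₁ ξ₃ ξ₂ (Zexp m x y) = 0 := by
  rw [eq_comm, ← sub_eq_zero, ← Module.forall_dual_apply_eq_zero_iff k]
  refine forall_congr' fun ξ₃ ↦ Eq.congr_left ?_
  rw [tripleEval_Zexp hr hsym, map_sub, apply_sharp_eq_apply_sharp_comm, hsym]
  simp only [LinearMap.sub_apply, LinearMap.add_apply, LinearMap.comp_apply, LinearMap.flip_apply,
    map_add]
  ring

lemma sharp_preLie_eq_iff (hr : r = ∑ i, x i ⊗ₜ[k] y i)
    (hsym : TensorProduct.comm k A A r = r) (m : A →ₗ[k] A →ₗ[k] A) (ξ₁ ξ₂ : A →ₗ[k] k) :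
    m (sharp k r ξ₁) (sharp k r ξ₂)
        = sharp k r (ξ₂ ∘ₗ (m.flip (sharp k r ξ₁) - m (sharp k r ξ₁))
            + ξ₁ ∘ₗ m.flip (sharp k r ξ₂))
      ↔ ∀ ξ₃, tripleEval ξ₁ ξ₃ ξ₂ (PLexp m x y) = 0 := by
  rw [eq_comm, ← sub_eq_zero, ← Module.forall_dual_apply_eq_zero_iff k]
  refine forall_congr' fun ξ₃ ↦ Eq.congr_left ?_
  rw [tripleEval_PLexp hr hsym, map_sub, apply_sharp_eq_apply_sharp_comm, hsym]
  simp only [LinearMap.sub_apply, LinearMap.add_apply, LinearMap.comp_apply, LinearMap.flip_apply,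
    map_sub]
  ring

end YangBaxter

theorem statement16_general (k A : Type) [Field k]
    [AddCommGroup A] [Module k A] [FiniteDimensional k A]
    (ast circ : A →ₗ[k] A →ₗ[k] A)
    (r : A ⊗[k] A) (p : ℕ) (x y : Fin p → A)
    (hr : r = ∑ i : Fin p, (x i) ⊗ₜ[k] (y i))
    (hsym : (TensorProduct.comm k A A) r = r)
    :
    (Zexp ast x y = 0 ∧ PLexp circ x y = 0)
      ↔ (∀ ξ₁ ξ₂ : A →ₗ[k] k,
          ast (sharp k r ξ₁) (sharp k r ξ₂)
            = sharp k r (ξ₂ ∘ₗ (ast (sharp k r ξ₁) + ast.flip (sharp k r ξ₁))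
                - ξ₁ ∘ₗ (ast.flip (sharp k r ξ₂))) ∧
          circ (sharp k r ξ₁) (sharp k r ξ₂)
            = sharp k r (ξ₂ ∘ₗ (circ.flip (sharp k r ξ₁) - circ (sharp k r ξ₁))
                + ξ₁ ∘ₗ (circ.flip (sharp k r ξ₂)))) := by
  simp only [eq_zero_iff_forall_tripleEval, sharp_zinbiel_eq_iff hr hsym,
    sharp_preLie_eq_iff hr hsym]
  exact ⟨fun h ξ₁ ξ₂ ↦ ⟨fun ξ₃ ↦ h.1 ξ₁ ξ₃ ξ₂, fun ξ₃ ↦ h.2 ξ₁ ξ₃ ξ₂⟩,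
    fun h ↦ ⟨fun a b c ↦ (h a c).1 b, fun a b c ↦ (h a c).2 b⟩⟩

theorem statement16 (k A : Type) [Field k] [CharZero k]
    [AddCommGroup A] [Module k A] [FiniteDimensional k A]
    (ast circ : A →ₗ[k] A →ₗ[k] A) (hA : IsPrePoisson ast circ)
    (r : A ⊗[k] A) (p : ℕ) (x y : Fin p → A)
    (hr : r = ∑ i : Fin p, (x i) ⊗ₜ[k] (y i))
    (hsym : (TensorProduct.comm k A A) r = r)
    :
    (Zexp ast x y = 0 ∧ PLexp circ x y = 0)
      ↔ (∀ ξ₁ ξ₂ : A →ₗ[k] k,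
          ast (sharp k r ξ₁) (sharp k r ξ₂)
            = sharp k r (ξ₂ ∘ₗ (ast (sharp k r ξ₁) + ast.flip (sharp k r ξ₁))
                - ξ₁ ∘ₗ (ast.flip (sharp k r ξ₂))) ∧
          circ (sharp k r ξ₁) (sharp k r ξ₂)
            = sharp k r (ξ₂ ∘ₗ (circ.flip (sharp k r ξ₁) - circ (sharp k r ξ₁))
                + ξ₁ ∘ₗ (circ.flip (sharp k r ξ₂)))) :=
  statement16_general k A ast circ r p x y hr hsym
end
end

section
/- Let k be a field of characteristic zero, (A, ∗, ∘) a finite-dimensional pre-Poisson algebra with a nondegenerate bilinear form ϖ, {e₁,…,e_n} a basis of A and {f₁,…,f_n} the dual basis with respect to ϖ (ϖ(fᵢ, eⱼ) = δ_{ij}), and r = Σᵢ eᵢ ⊗ fᵢ ∈ A ⊗ A. Then r is a symmetric solution of the pre-Poisson Yang–Baxter equation in (A, ∗, ∘) if and only if (A, ∗, ∘, ϖ) is a quasi-Frobenius pre-Poisson algebra. -/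
open TensorProduct

noncomputable section

/-! Pairing each tensor factor with `ϖ` turns tensors into multilinear forms, and detects them,
since the `ϖ (f i)` are the coordinate functionals of `e`. The `fᵢ` form a basis too, so
`∑ ϖ(c, eᵢ) fᵢ = c`, and, once `ϖ` is symmetric, `∑ ϖ(c, fᵢ) eᵢ = c`: `∑ eᵢ ⊗ fᵢ` is the tensor
inverse to `ϖ`. These contractions collapse every double sum in `Z_r` and `PL_r`, so the forms of
`τ r - r`, `Z_r` and `PL_r` are `ϖ(a, b) - ϖ(b, a)` and the defects of the two quasi-Frobenius
identities. -/

section Copairing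

variable {k A : Type*} [CommSemiring k] [AddCommMonoid A] [Module k A]
  (ϖ : A →ₗ[k] A →ₗ[k] k)

def pairing (a b : A) : Module.Dual k (A ⊗[k] A) :=
  TensorProduct.dualDistrib k A A (ϖ a ⊗ₜ ϖ b)

def pairing₃ (a b c : A) : Module.Dual k ((A ⊗[k] A) ⊗[k] A) :=
  TensorProduct.dualDistrib k (A ⊗[k] A) A (pairing ϖ a b ⊗ₜ ϖ c)

@[simp]
lemma pairing_tmul (a b u v : A) : pairing ϖ a b (u ⊗ₜ v) = ϖ a u * ϖ b v := rfl

@[simp]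
lemma pairing₃_tmul (a b c u v w : A) :
    pairing₃ ϖ a b c ((u ⊗ₜ v) ⊗ₜ w) = ϖ a u * ϖ b v * ϖ c w := rfl

lemma pairing_comm_apply (a b : A) (t : A ⊗[k] A) :
    pairing ϖ a b (TensorProduct.comm k A A t) = pairing ϖ b a t := by
  induction t with
  | zero => simp
  | tmul u v => simp [mul_comm]
  | add s t hs ht => simp only [map_add, hs, ht]

/-- `∑ i, x i ⊗ y i` is the tensor inverse to `ϖ`. -/
def IsCopairing {ι : Type*} [Fintype ι] (x y : ι → A) : Prop :=
  ∀ c, ∑ i, ϖ c (x i) • y i = c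

variable {ϖ} {ι : Type*} [Fintype ι] {x y x' y' : ι → A}

lemma IsCopairing.sum_smul_apply {M : Type*} [AddCommMonoid M] [Module k M]
    (h : IsCopairing ϖ x y) (g : A →ₗ[k] M) (c : A) :
    ∑ i, ϖ c (x i) • g (y i) = g c := by
  conv_rhs => rw [← h c]
  simp [map_sum]

lemma IsCopairing.sum_sum_eq (h : IsCopairing ϖ x y) (h' : IsCopairing ϖ x' y')
    (μ : A →ₗ[k] A →ₗ[k] A) (d a b : A) {F : ι → ι → k}
    (hF : ∀ i j, F i j = ϖ a (x i) * ϖ b (x' j) * ϖ d (μ (y i) (y' j))) :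
    ∑ i, ∑ j, F i j = ϖ d (μ a b) := by
  have inner : ∀ i, ∑ j, ϖ b (x' j) * ϖ d (μ (y i) (y' j)) = ϖ d (μ (y i) b) :=
    fun i => h'.sum_smul_apply (ϖ d ∘ₗ μ (y i)) b
  simp_rw [hF, mul_assoc, ← Finset.mul_sum, inner]
  exact h.sum_smul_apply (ϖ d ∘ₗ μ.flip b) a

lemma IsCopairing.pairing_sum_tmul (h : IsCopairing ϖ x y) (a b : A) :
    pairing ϖ a b (∑ i, x i ⊗ₜ y i) = ϖ b a := by
  simpa using h.sum_smul_apply (ϖ b) a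

end Copairing

lemma Module.Basis.tensorProduct_coord {k M N ι κ : Type*} [CommSemiring k]
    [AddCommMonoid M] [Module k M] [AddCommMonoid N] [Module k N]
    (b : Module.Basis ι k M) (c : Module.Basis κ k N) (i : ι) (j : κ) :
    (b.tensorProduct c).coord (i, j) = TensorProduct.dualDistrib k M N (b.coord i ⊗ₜ c.coord j) :=
  TensorProduct.ext' fun u v => by simp [mul_comm]

section DualBasis

variable {k A : Type*} [Field k] [AddCommGroup A] [Module k A] {ϖ : A →ₗ[k] A →ₗ[k] k}
  {ι : Type*} [DecidableEq ι] {e : Module.Basis ι k A} {f : ι → A}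

lemma coord_eq_of_dual (hdual : ∀ i j, ϖ (f i) (e j) = if i = j then 1 else 0) (i : ι) :
    e.coord i = ϖ (f i) :=
  e.ext fun j => by simp [hdual, Finsupp.single_apply, eq_comm]

lemma pairing_dual_eq_coord (hdual : ∀ i j, ϖ (f i) (e j) = if i = j then 1 else 0) (p q : ι) :
    pairing ϖ (f p) (f q) = (e.tensorProduct e).coord (p, q) := by
  rw [Module.Basis.tensorProduct_coord, coord_eq_of_dual hdual, coord_eq_of_dual hdual]
  rfl

lemma pairing₃_dual_eq_coord (hdual : ∀ i j, ϖ (f i) (e j) = if i = j then 1 else 0)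
    (p q s : ι) :
    pairing₃ ϖ (f p) (f q) (f s) = ((e.tensorProduct e).tensorProduct e).coord ((p, q), s) := by
  rw [Module.Basis.tensorProduct_coord, ← pairing_dual_eq_coord hdual, coord_eq_of_dual hdual]
  rfl

lemma eq_iff_forall_pairing (hdual : ∀ i j, ϖ (f i) (e j) = if i = j then 1 else 0)
    {t t' : A ⊗[k] A} : t = t' ↔ ∀ a b, pairing ϖ a b t = pairing ϖ a b t' := by
  refine ⟨fun h _ _ => h ▸ rfl, fun h => (e.tensorProduct e).ext_elem fun ⟨p, q⟩ => ?_⟩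
  simpa [← Module.Basis.coord_apply, ← pairing_dual_eq_coord hdual] using h (f p) (f q)

lemma eq_zero_iff_forall_pairing₃ (hdual : ∀ i j, ϖ (f i) (e j) = if i = j then 1 else 0)
    {t : (A ⊗[k] A) ⊗[k] A} : t = 0 ↔ ∀ a b c, pairing₃ ϖ a b c t = 0 := by
  refine ⟨fun h _ _ _ => h ▸ map_zero _, fun h => ?_⟩
  refine ((e.tensorProduct e).tensorProduct e).forall_coord_eq_zero_iff.mp fun ⟨⟨p, q⟩, s⟩ => ?_
  rw [← pairing₃_dual_eq_coord hdual]
  exact h _ _ _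

variable [Fintype ι]

lemma linearIndependent_of_dual (hdual : ∀ i j, ϖ (f i) (e j) = if i = j then 1 else 0) :
    LinearIndependent k f := by
  refine Fintype.linearIndependent_iff.mpr fun g hg i => ?_
  simpa [hdual] using congrArg (fun v => ϖ v (e i)) hg

lemma isCopairing_of_dual (hdual : ∀ i j, ϖ (f i) (e j) = if i = j then 1 else 0) :
    IsCopairing ϖ e f := by
  have : FiniteDimensional k A := Module.Finite.of_basis e
  let fb := basisOfLinearIndependentOfCardEqFinrank' f (linearIndependent_of_dual hdual)
    (Module.finrank_eq_card_basis e).symm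
  have hfb : ⇑fb = f := coe_basisOfLinearIndependentOfCardEqFinrank' ..
  have hcoord : ∀ i, fb.coord i = ϖ.flip (e i) := fun i => fb.ext fun j => by
    rw [fb.coord_apply, fb.repr_self, LinearMap.flip_apply, hfb, hdual, Finsupp.single_apply]
  intro c
  conv_rhs => rw [← fb.sum_repr c]
  simp [← fb.coord_apply, hcoord, hfb]

lemma isCopairing_of_dual_of_symm (hdual : ∀ i j, ϖ (f i) (e j) = if i = j then 1 else 0)
    (hsym : ∀ a b, ϖ a b = ϖ b a) : IsCopairing ϖ f e := by
  intro c
  conv_rhs => rw [← e.sum_repr c]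
  simp [hsym c, ← e.coord_apply, coord_eq_of_dual hdual]

lemma comm_sum_tmul_eq_iff (hdual : ∀ i j, ϖ (f i) (e j) = if i = j then 1 else 0) :
    TensorProduct.comm k A A (∑ i, e i ⊗ₜ f i) = ∑ i, e i ⊗ₜ f i ↔ ∀ a b, ϖ a b = ϖ b a := by
  simp only [eq_iff_forall_pairing hdual, pairing_comm_apply,
    (isCopairing_of_dual hdual).pairing_sum_tmul]

end DualBasis

section QuasiFrobenius

variable {k A : Type} [Field k] [AddCommGroup A] [Module k A] {ϖ : A →ₗ[k] A →ₗ[k] k}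
  {p : ℕ} {x y : Fin p → A}

lemma pairing₃_Zexp (hxy : IsCopairing ϖ x y) (hyx : IsCopairing ϖ y x)
    (μ : A →ₗ[k] A →ₗ[k] A) (a b c : A) :
    pairing₃ ϖ a b c (Zexp μ x y)
      = ϖ c (μ a b) + ϖ c (μ b a) - ϖ b (μ a c) - ϖ a (μ b c) := calc
  _ = ϖ a (μ c b) + ϖ b (μ c a) + ϖ c (μ a b) + ϖ c (μ b a)
        - ϖ b (μ a c) - ϖ b (μ c a) - ϖ a (μ c b) - ϖ a (μ b c) := by
    simp only [Zexp, map_sum, map_add, map_sub, pairing₃_tmul, Finset.sum_add_distrib,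
      Finset.sum_sub_distrib]
    congrm ?_ + ?_ + ?_ + ?_ - ?_ - ?_ - ?_ - ?_
    · exact hyx.sum_sum_eq hyx μ a c b fun _ _ => by ring
    · exact hyx.sum_sum_eq hyx μ b c a fun _ _ => by ring
    · exact hxy.sum_sum_eq hxy μ c a b fun _ _ => by ring
    · exact hxy.sum_sum_eq hxy μ c b a fun _ _ => by ring
    · exact hxy.sum_sum_eq hyx μ b a c fun _ _ => by ring
    · exact hyx.sum_sum_eq hxy μ b c a fun _ _ => by ring
    · exact hyx.sum_sum_eq hxy μ a c b fun _ _ => by ring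
    · exact hxy.sum_sum_eq hyx μ a b c fun _ _ => by ring
  _ = _ := by ring

lemma pairing₃_PLexp (hxy : IsCopairing ϖ x y) (hyx : IsCopairing ϖ y x)
    (μ : A →ₗ[k] A →ₗ[k] A) (a b c : A) :
    pairing₃ ϖ a b c (PLexp μ x y)
      = ϖ a (μ b c) + ϖ c (μ b a) - ϖ b (μ a c) - ϖ c (μ a b) := calc
  _ = ϖ a (μ c b) + ϖ b (μ c a) + ϖ a (μ b c) + ϖ c (μ b a)
        - ϖ b (μ c a) - ϖ b (μ a c) - ϖ a (μ c b) - ϖ c (μ a b) := by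
    simp only [PLexp, map_sum, map_add, map_sub, pairing₃_tmul, Finset.sum_add_distrib,
      Finset.sum_sub_distrib]
    congrm ?_ + ?_ + ?_ + ?_ - ?_ - ?_ - ?_ - ?_
    · exact hyx.sum_sum_eq hyx μ a c b fun _ _ => by ring
    · exact hyx.sum_sum_eq hxy μ b c a fun _ _ => by ring
    · exact hxy.sum_sum_eq hyx μ a b c fun _ _ => by ring
    · exact hxy.sum_sum_eq hxy μ c b a fun _ _ => by ring
    · exact hyx.sum_sum_eq hyx μ b c a fun _ _ => by ring
    · exact hxy.sum_sum_eq hyx μ b a c fun _ _ => by ring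
    · exact hyx.sum_sum_eq hxy μ a c b fun _ _ => by ring
    · exact hxy.sum_sum_eq hxy μ c a b fun _ _ => by ring
  _ = _ := by ring

variable {e : Module.Basis (Fin p) k A} {f : Fin p → A}

lemma Zexp_eq_zero_iff (hdual : ∀ i j, ϖ (f i) (e j) = if i = j then 1 else 0)
    (hsym : ∀ a b, ϖ a b = ϖ b a) (μ : A →ₗ[k] A →ₗ[k] A) :
    Zexp μ e f = 0 ↔ ∀ a₁ a₂ a₃, ϖ (μ a₁ a₂ + μ a₂ a₁) a₃ = ϖ a₁ (μ a₂ a₃) + ϖ a₂ (μ a₁ a₃) := by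
  rw [eq_zero_iff_forall_pairing₃ hdual]
  refine forall₃_congr fun a b c => ?_
  rw [pairing₃_Zexp (isCopairing_of_dual hdual) (isCopairing_of_dual_of_symm hdual hsym),
    map_add, LinearMap.add_apply, hsym (μ a b), hsym (μ b a)]
  constructor <;> intro h <;> linear_combination h

lemma PLexp_eq_zero_iff (hdual : ∀ i j, ϖ (f i) (e j) = if i = j then 1 else 0)
    (hsym : ∀ a b, ϖ a b = ϖ b a) (μ : A →ₗ[k] A →ₗ[k] A) :
    PLexp μ e f = 0 ↔ ∀ a₁ a₂ a₃,
      ϖ (μ a₁ a₂) a₃ - ϖ a₁ (μ a₂ a₃) = ϖ (μ a₂ a₁) a₃ - ϖ a₂ (μ a₁ a₃) := by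
  rw [eq_zero_iff_forall_pairing₃ hdual]
  refine forall₃_congr fun a b c => ?_
  rw [pairing₃_PLexp (isCopairing_of_dual hdual) (isCopairing_of_dual_of_symm hdual hsym),
    hsym (μ a b), hsym (μ b a)]
  constructor <;> intro h <;> linear_combination -h

end QuasiFrobenius

theorem statement17_general (k A : Type) [Field k]
    [AddCommGroup A] [Module k A]
    (ast circ : A →ₗ[k] A →ₗ[k] A)
    (ϖ : A →ₗ[k] A →ₗ[k] k)
    (n : ℕ) (e : Module.Basis (Fin n) k A) (f : Fin n → A)
    (hdual : ∀ i j : Fin n, ϖ (f i) (e j) = if i = j then 1 else 0)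
    (r : A ⊗[k] A) (hr : r = ∑ i : Fin n, (e i : A) ⊗ₜ[k] (f i)) :
    ((TensorProduct.comm k A A) r = r ∧
     Zexp ast (fun i => (e i : A)) f = 0 ∧
     PLexp circ (fun i => (e i : A)) f = 0)
      ↔ (((∀ a₁ a₂ : A, ϖ a₁ a₂ = ϖ a₂ a₁) ∧
       (∀ a₁ a₂ a₃ : A,
         ϖ (ast a₁ a₂ + ast a₂ a₁) a₃ = ϖ a₁ (ast a₂ a₃) + ϖ a₂ (ast a₁ a₃))) ∧
         (∀ a₁ a₂ a₃ : A,
         ϖ (circ a₁ a₂) a₃ - ϖ a₁ (circ a₂ a₃) = ϖ (circ a₂ a₁) a₃ - ϖ a₂ (circ a₁ a₃))) := by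
  subst hr
  rw [comm_sum_tmul_eq_iff hdual, and_assoc]
  exact and_congr_right fun hsym =>
    and_congr (Zexp_eq_zero_iff hdual hsym ast) (PLexp_eq_zero_iff hdual hsym circ)

theorem statement17 (k A : Type) [Field k] [CharZero k]
    [AddCommGroup A] [Module k A] [FiniteDimensional k A]
    (ast circ : A →ₗ[k] A →ₗ[k] A) (hA : IsPrePoisson ast circ)
    (ϖ : A →ₗ[k] A →ₗ[k] k)
    (hnd : ∀ a : A, (∀ a' : A, ϖ a a' = 0) → a = 0)
    (n : ℕ) (e : Module.Basis (Fin n) k A) (f : Fin n → A)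
    (hdual : ∀ i j : Fin n, ϖ (f i) (e j) = if i = j then 1 else 0)
    (r : A ⊗[k] A) (hr : r = ∑ i : Fin n, (e i : A) ⊗ₜ[k] (f i)) :
    ((TensorProduct.comm k A A) r = r ∧
     Zexp ast (fun i => (e i : A)) f = 0 ∧
     PLexp circ (fun i => (e i : A)) f = 0)
      ↔ (((∀ a₁ a₂ : A, ϖ a₁ a₂ = ϖ a₂ a₁) ∧
       (∀ a₁ a₂ a₃ : A,
         ϖ (ast a₁ a₂ + ast a₂ a₁) a₃ = ϖ a₁ (ast a₂ a₃) + ϖ a₂ (ast a₁ a₃))) ∧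
         (∀ a₁ a₂ a₃ : A,
         ϖ (circ a₁ a₂) a₃ - ϖ a₁ (circ a₂ a₃) = ϖ (circ a₂ a₁) a₃ - ϖ a₂ (circ a₁ a₃))) :=
  statement17_general k A ast circ ϖ n e f hdual r hr
end
end
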